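/- arXiv:2507.13566 — 7 statements merged into one kernel-verified Lean document; each statement's English description precedes it below -/
import Mathlib

section
/- Let ν2(n) denote the number of partitions of n into exactly two part sizes. Then ν2(4n+2) ≡ 0 (mod 2) for all n ≥ 0. -/
/-!
Conjugating its Ferrers diagram turns a partition into two part sizes into another one, so
conjugation is an involution on the set counted by `ν₂ n`. A self-conjugate partition into two
part sizes is a `b × b` square with two `b × k` arms, hence `n = b (b + 2k)`, and such an `n` is
odd or divisible by `4`. For `n ≡ 2 (mod 4)` the involution has no fixed points and `ν₂ n` is
even.
-/

/-- `ν₂ n` counts the partitions of `n` into exactly two part sizes, i.e. quadruples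
`(λ1, m1, λ2, m2)` with `λ1 > λ2 ≥ 1`, `m1, m2 ≥ 1`, `λ1 m1 + λ2 m2 = n`. -/
noncomputable def nu2 (n : ℕ) : ℕ :=
  Set.ncard {q : ℕ × ℕ × ℕ × ℕ |
    q.2.2.1 < q.1 ∧ 1 ≤ q.2.2.1 ∧ 1 ≤ q.2.1 ∧ 1 ≤ q.2.2.2 ∧
    q.1 * q.2.1 + q.2.2.1 * q.2.2.2 = n}

theorem Set.Finite.even_ncard_of_involution {α : Type*} {s : Set α} (hs : s.Finite)
    (f : α → α) (hf_mem : ∀ x ∈ s, f x ∈ s) (hf_inv : ∀ x ∈ s, f (f x) = x)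
    (hf_ne : ∀ x ∈ s, f x ≠ x) : Even s.ncard := by
  rw [Set.ncard_eq_toFinset_card s hs, ← ZMod.natCast_eq_zero_iff_even, Finset.card_eq_sum_ones,
    Nat.cast_sum, Nat.cast_one]
  simp only [← hs.mem_toFinset] at hf_mem hf_inv hf_ne
  exact Finset.sum_involution (fun x _ ↦ f x) (fun _ _ ↦ by decide) (fun x hx _ ↦ hf_ne x hx)
    hf_mem hf_inv

theorem mul_add_two_mul_mod_four_ne_two (b k : ℕ) : b * (b + 2 * k) % 4 ≠ 2 := by
  rcases Nat.even_or_odd' b with ⟨t, rfl | rfl⟩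
  · rw [show 2 * t * (2 * t + 2 * k) = 4 * (t * (t + k)) by ring]
    omega
  · rw [show (2 * t + 1) * (2 * t + 1 + 2 * k) = 2 * (2 * t * t + 2 * t + 2 * t * k + k) + 1 by
      ring]
    omega

namespace Nu2

/-- The quadruple `(λ1, m1, λ2, m2)` stands for the partition with `m1` parts `λ1` and `m2`
parts `λ2`. -/
def twoSizePartitions (n : ℕ) : Set (ℕ × ℕ × ℕ × ℕ) :=
  {q | q.2.2.1 < q.1 ∧ 1 ≤ q.2.2.1 ∧ 1 ≤ q.2.1 ∧ 1 ≤ q.2.2.2 ∧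
    q.1 * q.2.1 + q.2.2.1 * q.2.2.2 = n}

theorem nu2_eq_ncard (n : ℕ) : nu2 n = (twoSizePartitions n).ncard := rfl

theorem twoSizePartitions_finite (n : ℕ) : (twoSizePartitions n).Finite := by
  refine (Set.finite_Icc (0, 0, 0, 0) (n, n, n, n)).subset ?_
  rintro ⟨a, m, b, k⟩ ⟨hba, hb, hm, hk, hn⟩
  dsimp only at hba hb hm hk hn
  have ha : a ≤ a * m := Nat.le_mul_of_pos_right a hm
  have hm' : m ≤ a * m := Nat.le_mul_of_pos_left m (hb.trans hba.le)
  have hb' : b ≤ b * k := Nat.le_mul_of_pos_right b hk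
  have hk' : k ≤ b * k := Nat.le_mul_of_pos_left k hb
  simp only [Set.mem_Icc, Prod.le_def]
  omega

/-- Conjugation of Ferrers diagrams: `m1` parts `λ1` and `m2` parts `λ2` become `λ2` parts
`m1 + m2` and `λ1 - λ2` parts `m1`. -/
def conj (q : ℕ × ℕ × ℕ × ℕ) : ℕ × ℕ × ℕ × ℕ :=
  (q.2.1 + q.2.2.2, q.2.2.1, q.2.1, q.1 - q.2.2.1)

variable {n : ℕ} {q : ℕ × ℕ × ℕ × ℕ}

theorem conj_mem (hq : q ∈ twoSizePartitions n) : conj q ∈ twoSizePartitions n := by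
  obtain ⟨a, m, b, k⟩ := q
  obtain ⟨hba, hb, hm, hk, hn⟩ : b < a ∧ 1 ≤ b ∧ 1 ≤ m ∧ 1 ≤ k ∧ a * m + b * k = n := hq
  obtain ⟨c, rfl⟩ : ∃ c, a = b + c := ⟨a - b, by omega⟩
  simp only [twoSizePartitions, conj, Set.mem_ofPred_eq, Nat.add_sub_cancel_left]
  refine ⟨by omega, hm, hb, by omega, ?_⟩
  rw [← hn]
  ring

theorem conj_conj (hq : q ∈ twoSizePartitions n) : conj (conj q) = q := by
  obtain ⟨a, m, b, k⟩ := q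
  obtain ⟨hba, -⟩ : b < a ∧ _ := hq
  simp only [conj, Nat.add_sub_cancel_left, Prod.mk.injEq, and_true]
  omega

theorem exists_eq_mul_add_two_mul_of_conj_eq (hq : q ∈ twoSizePartitions n) (hfix : conj q = q) :
    ∃ b k, n = b * (b + 2 * k) := by
  obtain ⟨a, m, b, k⟩ := q
  obtain ⟨-, -, -, -, hn⟩ : _ ∧ _ ∧ _ ∧ _ ∧ a * m + b * k = n := hq
  simp only [conj, Prod.mk.injEq] at hfix
  obtain ⟨rfl, rfl, -⟩ := hfix
  exact ⟨b, k, by rw [← hn]; ring⟩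

theorem even_nu2_of_forall_ne (h : ∀ b k, n ≠ b * (b + 2 * k)) : Even (nu2 n) := by
  rw [nu2_eq_ncard]
  exact (twoSizePartitions_finite n).even_ncard_of_involution conj (fun _ ↦ conj_mem)
    (fun _ ↦ conj_conj) fun q hq hfix ↦
      let ⟨b, k, hn⟩ := exists_eq_mul_add_two_mul_of_conj_eq hq hfix
      h b k hn

end Nu2

theorem nu2_four_n_add_two_even (n : ℕ) : nu2 (4 * n + 2) % 2 = 0 :=
  Nat.even_iff.mp <| Nu2.even_nu2_of_forall_ne fun b k hn ↦
    mul_add_two_mul_mod_four_ne_two b k (by omega)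
end

section
/- For a positive integer m, write m = 2^{b(m)} ℓ(m) with ℓ(m) odd. If λ1 m1 + λ2 m2 = n with n ≡ 14 (mod 16) and λ1, m1, λ2, m2 positive integers, then ℓ(λ1) ≢ ℓ(m1) (mod 8) or ℓ(λ2) ≢ ℓ(m2) (mod 8). -/
/-!
Writing `a = 2^x u`, `b = 2^y v` with `u, v` odd, the hypothesis `u ≡ v (mod 8)` makes
`u v ≡ u² ≡ 1 (mod 8)`, so `a b = 2^(x+y) u v` is one of `0, 1, 2, 4, 8, 9` modulo 16.
No two of these residues add up to `14` modulo 16.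
-/

lemma Nat.mul_mod_eight_eq_one_of_odd_of_mod_eight_eq {u v : ℕ} (hu : Odd u)
    (huv : u % 8 = v % 8) : u * v % 8 = 1 := by
  have hu8 : u % 8 = 1 ∨ u % 8 = 3 ∨ u % 8 = 5 ∨ u % 8 = 7 := by
    rw [Nat.odd_iff] at hu; omega
  rw [Nat.mul_mod, ← huv]
  rcases hu8 with h | h | h | h <;> rw [h]

lemma Nat.two_pow_mul_mod_sixteen_mem {w : ℕ} (hw : w % 8 = 1) (e : ℕ) :
    2 ^ e * w % 16 ∈ ({0, 1, 2, 4, 8, 9} : Finset ℕ) := by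
  rcases Nat.lt_or_ge e 4 with he | he
  · interval_cases e <;> simp <;> omega
  · have : 16 ∣ 2 ^ e * w :=
      Dvd.dvd.mul_right (Nat.pow_dvd_pow_iff_le_right'.mpr he) w
    simp [Nat.mod_eq_zero_of_dvd this]

lemma Nat.mul_mod_sixteen_mem_of_ordCompl_mod_eight_eq {a b : ℕ}
    (h : ordCompl[2] a % 8 = ordCompl[2] b % 8) :
    a * b % 16 ∈ ({0, 1, 2, 4, 8, 9} : Finset ℕ) := by
  rcases Nat.eq_zero_or_pos (a * b) with hab | hab
  · simp [hab]
  have hodd : Odd (ordCompl[2] a) :=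
    Nat.odd_iff.mpr (Nat.two_dvd_ne_zero.mp
      (Nat.not_dvd_ordCompl Nat.prime_two (Nat.pos_of_mul_pos_right hab).ne'))
  rw [← Nat.ordProj_mul_ordCompl_eq_self (a * b) 2, Nat.ordCompl_mul]
  exact Nat.two_pow_mul_mod_sixteen_mem
    (Nat.mul_mod_eight_eq_one_of_odd_of_mod_eight_eq hodd h) _

theorem odd_parts_incongruent_mod_eight_general (n l1 m1 l2 m2 : ℕ)
    (hn : n % 16 = 14) (hsum : l1 * m1 + l2 * m2 = n) :
    (ordCompl[2] l1) % 8 ≠ (ordCompl[2] m1) % 8 ∨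
    (ordCompl[2] l2) % 8 ≠ (ordCompl[2] m2) % 8 := by
  by_contra! ⟨h1, h2⟩
  have hr1 := Nat.mul_mod_sixteen_mem_of_ordCompl_mod_eight_eq h1
  have hr2 := Nat.mul_mod_sixteen_mem_of_ordCompl_mod_eight_eq h2
  simp only [Finset.mem_insert, Finset.mem_singleton] at hr1 hr2
  omega

theorem odd_parts_incongruent_mod_eight (n l1 m1 l2 m2 : ℕ)
    (hn : n % 16 = 14) (hsum : l1 * m1 + l2 * m2 = n)
    (hl1 : 0 < l1) (hm1 : 0 < m1) (hl2 : 0 < l2) (hm2 : 0 < m2) :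
    (ordCompl[2] l1) % 8 ≠ (ordCompl[2] m1) % 8 ∨
    (ordCompl[2] l2) % 8 ≠ (ordCompl[2] m2) % 8 :=
  odd_parts_incongruent_mod_eight_general n l1 m1 l2 m2 hn hsum
end

section
/- If n ≡ 14 (mod 16), then σ1(n/2) is divisible by 8 and hence σ1(n) = 3·σ1(n/2) is divisible by 8. -/
/-!
Write `n = 2m` with `m ≡ 7 (mod 8)`. Since `m` is odd, `σ(n) = σ(2) σ(m) = 3 σ(m)`.
The divisors of `m` pair off as `d ↔ m / d`, never with `d = m / d` because `7` is not a
square mod `8`, and `d * (m / d) ≡ -1 (mod 8)` forces `d + m / d ≡ 0 (mod 8)`, as every odd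
square is `1 (mod 8)`.
-/

namespace Nat

theorem dvd_sum_divisors_of_forall_dvd_add_div {k m : ℕ} (hm : ¬IsSquare m)
    (hk : ∀ d ∈ m.divisors, k ∣ d + m / d) : k ∣ ∑ d ∈ m.divisors, d := by
  have hm0 : m ≠ 0 := by rintro rfl; exact hm ⟨0, rfl⟩
  rw [← ZMod.natCast_eq_zero_iff, Nat.cast_sum]
  refine Finset.sum_involution (fun d _ => m / d) (fun d hd => ?_) (fun d hd _ hfix => ?_)
    (fun d hd => ?_) (fun d hd => ?_)
  · exact_mod_cast (ZMod.natCast_eq_zero_iff _ k).mpr (hk d hd)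
  · exact hm ⟨d, by nth_rw 2 [← hfix]; rw [Nat.mul_div_cancel' (Nat.dvd_of_mem_divisors hd)]⟩
  · exact Nat.mem_divisors.mpr ⟨Nat.div_dvd_of_dvd (Nat.dvd_of_mem_divisors hd), hm0⟩
  · exact Nat.div_div_self (Nat.dvd_of_mem_divisors hd) hm0

theorem not_isSquare_of_mod_eight_eq_seven {m : ℕ} (hm : m % 8 = 7) : ¬IsSquare m := by
  rintro ⟨r, rfl⟩
  have hsq : ∀ x : ZMod 8, x * x ≠ 7 := by decide
  exact hsq r (by exact_mod_cast (ZMod.natCast_eq_natCast_iff' (r * r) 7 8).mpr hm)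

theorem eight_dvd_add_div_of_mod_eight_eq_seven {m d : ℕ} (hm : m % 8 = 7) (hd : d ∣ m) :
    8 ∣ d + m / d := by
  have hprod : (d : ZMod 8) * ((m / d : ℕ) : ZMod 8) = -1 := by
    rw [← Nat.cast_mul, Nat.mul_div_cancel' hd, ← ZMod.natCast_mod, hm]
    rfl
  have hpair : ∀ x y : ZMod 8, x * y = -1 → x + y = 0 := by decide
  rw [← ZMod.natCast_eq_zero_iff, Nat.cast_add]
  exact hpair _ _ hprod

theorem eight_dvd_sum_divisors_of_mod_eight_eq_seven {m : ℕ} (hm : m % 8 = 7) :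
    8 ∣ ∑ d ∈ m.divisors, d :=
  dvd_sum_divisors_of_forall_dvd_add_div (not_isSquare_of_mod_eight_eq_seven hm)
    fun _ hd => eight_dvd_add_div_of_mod_eight_eq_seven hm (Nat.dvd_of_mem_divisors hd)

theorem sum_divisors_two_mul_of_odd {m : ℕ} (hm : Odd m) :
    ∑ d ∈ (2 * m).divisors, d = 3 * ∑ d ∈ m.divisors, d := by
  rw [Nat.Coprime.sum_divisors_mul (Nat.coprime_two_left.mpr hm), Nat.prime_two.divisors]
  rfl

end Nat

theorem eight_dvd_sigma_one_of_fourteen_mod_sixteen (n : ℕ) (hn : n % 16 = 14) :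
    8 ∣ ∑ d ∈ (n / 2).divisors, d ∧
    (∑ d ∈ n.divisors, d) = 3 * ∑ d ∈ (n / 2).divisors, d ∧
    8 ∣ ∑ d ∈ n.divisors, d := by
  have hm : n / 2 % 8 = 7 := by omega
  have hsum : ∑ d ∈ n.divisors, d = 3 * ∑ d ∈ (n / 2).divisors, d := by
    rw [← Nat.sum_divisors_two_mul_of_odd (by rw [Nat.odd_iff]; omega),
      Nat.mul_div_cancel' (by omega)]
  have h8 := Nat.eight_dvd_sum_divisors_of_mod_eight_eq_seven hm
  exact ⟨h8, hsum, hsum ▸ h8.mul_left 3⟩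
end

section
/- Let ν2(n) count partitions of n into exactly two part sizes. Then for n ≥ 2, 2·ν2(n) = (Σ_{k=1}^{n−1} d(k) d(n−k)) − σ1(n) + d(n), where d is the number-of-divisors function and σ1 the sum-of-divisors function. -/
open Finset

theorem Finset.card_eq_card_filter_lt_add_card_filter_gt_add_card_filter_eq {α β : Type*}
    [LinearOrder β] (s : Finset α) (f g : α → β) :
    #s = #(s.filter fun a => f a < g a) + #(s.filter fun a => g a < f a) +
      #(s.filter fun a => f a = g a) := by
  rw [← card_filter_add_card_filter_not (s := s) (fun a => f a < g a),
    ← card_filter_add_card_filter_not (s := s.filter fun a => ¬f a < g a) (fun a => g a < f a),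
    filter_filter, filter_filter, add_assoc]
  congr 3 <;> ext <;> simp only [mem_filter] <;> grind

theorem Nat.card_divisorsAntidiagonal (n : ℕ) : #n.divisorsAntidiagonal = #n.divisors := by
  rw [← Nat.map_div_right_divisors, card_map]

def rectanglePairs (n : ℕ) : Finset ((ℕ × ℕ) × ℕ × ℕ) :=
  (Ico 1 n).biUnion fun k => k.divisorsAntidiagonal ×ˢ (n - k).divisorsAntidiagonal

theorem mem_rectanglePairs {n : ℕ} {p : (ℕ × ℕ) × ℕ × ℕ} :
    p ∈ rectanglePairs n ↔ 0 < p.1.1 ∧ 0 < p.1.2 ∧ 0 < p.2.1 ∧ 0 < p.2.2 ∧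
      p.1.1 * p.1.2 + p.2.1 * p.2.2 = n := by
  obtain ⟨⟨a, b⟩, c, d⟩ := p
  simp only [rectanglePairs, mem_biUnion, mem_Ico, mem_product, Nat.mem_divisorsAntidiagonal]
  constructor
  · rintro ⟨k, ⟨hk, hkn⟩, ⟨rfl, -⟩, hcd, -⟩
    have : 0 < c * d := by omega
    refine ⟨Nat.pos_of_mul_pos_right hk, Nat.pos_of_mul_pos_left hk,
      Nat.pos_of_mul_pos_right this, Nat.pos_of_mul_pos_left this, by omega⟩
  · rintro ⟨ha, hb, hc, hd, rfl⟩
    have := Nat.mul_pos ha hb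
    have := Nat.mul_pos hc hd
    exact ⟨a * b, ⟨by omega, by omega⟩, ⟨rfl, by omega⟩, by omega, by omega⟩

theorem card_rectanglePairs (n : ℕ) :
    #(rectanglePairs n) = ∑ k ∈ Ico 1 n, #k.divisors * #(n - k).divisors := by
  rw [rectanglePairs, card_biUnion]
  · simp only [card_product, Nat.card_divisorsAntidiagonal]
  · intro k _ l _ hkl
    refine disjoint_left.2 fun p hk hl => hkl ?_
    rw [mem_product, Nat.mem_divisorsAntidiagonal] at hk hl
    exact hk.1.1.symm.trans hl.1.1

theorem card_rectanglePairs_filter_lt_comm (n : ℕ) :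
    #((rectanglePairs n).filter fun p => p.1.1 < p.2.1) =
      #((rectanglePairs n).filter fun p => p.2.1 < p.1.1) := by
  refine card_nbij' Prod.swap Prod.swap ?_ ?_ (fun _ _ => rfl) (fun _ _ => rfl) <;>
  · intro p hp
    simp only [coe_filter, Set.mem_ofPred_eq, mem_rectanglePairs, Prod.fst_swap,
      Prod.snd_swap] at hp ⊢
    grind

theorem rectanglePairs_filter_eq_biUnion (n : ℕ) :
    (rectanglePairs n).filter (fun p => p.1.1 = p.2.1) =
      n.divisorsAntidiagonal.biUnion fun am =>
        (Ioo 0 am.2).image fun b => ((am.1, b), (am.1, am.2 - b)) := by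
  ext ⟨⟨a, b⟩, c, d⟩
  simp only [mem_filter, mem_rectanglePairs, mem_biUnion, Nat.mem_divisorsAntidiagonal, mem_image,
    mem_Ioo, Prod.mk.injEq, Prod.exists]
  constructor
  · rintro ⟨⟨ha, hb, hc, hd, rfl⟩, rfl⟩
    refine ⟨a, b + d, ⟨by ring, by positivity⟩, b, ⟨hb, by omega⟩, ⟨rfl, rfl⟩, rfl, by omega⟩
  · rintro ⟨a', m, ⟨rfl, hn⟩, b', ⟨hb, hbm⟩, ⟨rfl, rfl⟩, rfl, rfl⟩
    have ha := Nat.pos_of_ne_zero (left_ne_zero_of_mul hn)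
    refine ⟨⟨ha, hb, ha, by omega, ?_⟩, rfl⟩
    rw [← mul_add, Nat.add_sub_cancel' hbm.le]

theorem card_rectanglePairs_filter_eq_add_card_divisors (n : ℕ) :
    #((rectanglePairs n).filter fun p => p.1.1 = p.2.1) + #n.divisors = ∑ d ∈ n.divisors, d := by
  rw [rectanglePairs_filter_eq_biUnion, card_biUnion, ← Nat.card_divisorsAntidiagonal,
    card_eq_sum_ones, ← sum_add_distrib, ← Nat.sum_divisorsAntidiagonal' fun _ m => m]
  · refine sum_congr rfl fun am ham => ?_
    rw [card_image_of_injective, Nat.card_Ioo]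
    · have := Nat.right_ne_zero_of_mem_divisorsAntidiagonal ham
      omega
    · intro b b' h
      simpa using congrArg (fun p => p.1.2) h
  · intro am _ am' _ hne
    simp only [disjoint_left, mem_image, mem_Ioo]
    rintro _ ⟨b, ⟨-, hb⟩, rfl⟩ ⟨b', ⟨-, hb'⟩, h⟩
    simp only [Prod.mk.injEq] at h
    exact hne (Prod.ext h.1.1.symm (by omega))

theorem nu2_eq_card_rectanglePairs_filter_lt (n : ℕ) :
    nu2 n = #((rectanglePairs n).filter fun p => p.2.1 < p.1.1) := by
  rw [← card_map (Equiv.prodAssoc ℕ ℕ (ℕ × ℕ)).toEmbedding, nu2, ← Set.ncard_coe_finset]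
  congr 1
  ext ⟨a, b, c, d⟩
  rw [mem_coe, mem_map_equiv]
  simp only [Set.mem_ofPred_eq, Equiv.prodAssoc_symm_apply, mem_filter, mem_rectanglePairs]
  omega

theorem nu2_formula_general (n : ℕ) :
    (2 * nu2 n : ℤ) =
      (∑ k ∈ Finset.Ico 1 n, (k.divisors.card : ℤ) * ((n - k).divisors.card : ℤ))
        - (∑ d ∈ n.divisors, (d : ℤ)) + (n.divisors.card : ℤ) := by
  have hsplit := (rectanglePairs n).card_eq_card_filter_lt_add_card_filter_gt_add_card_filter_eq
    (fun p => p.1.1) (fun p => p.2.1)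
  rw [card_rectanglePairs, card_rectanglePairs_filter_lt_comm,
    ← nu2_eq_card_rectanglePairs_filter_lt] at hsplit
  have hdiag := card_rectanglePairs_filter_eq_add_card_divisors n
  have hsplitZ := congrArg (Nat.cast : ℕ → ℤ) hsplit
  have hdiagZ := congrArg (Nat.cast : ℕ → ℤ) hdiag
  push_cast at hsplitZ hdiagZ
  linarith

theorem nu2_formula (n : ℕ) (hn : 2 ≤ n) :
    (2 * nu2 n : ℤ) =
      (∑ k ∈ Finset.Ico 1 n, (k.divisors.card : ℤ) * ((n - k).divisors.card : ℤ))
        - (∑ d ∈ n.divisors, (d : ℤ)) + (n.divisors.card : ℤ) :=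
  nu2_formula_general n
end

section
/- Let n ≡ 2 (mod 4). The number of partitions λ1^{m1} λ2^{m2} of n into two part sizes with parity class EOEO (λ1 even, m1 odd, λ2 even, m2 odd) equals the number with parity class OEOE (λ1 odd, m1 even, λ2 odd, m2 even) plus σ1(n/2)/2 − d(n)/4. -/
/-!
Write `n = 2N` with `N` odd. Halving the even entries identifies EOEO with the solutions of
`a m₁ + b m₂ = N` with `a > b ≥ 1` and `m₁, m₂` odd, and OEOE with the solutions of
`a c + b d = N` with `a > b` odd and `c, d ≥ 1`. Dropping the condition `a > b`, the two
unordered problems are exchanged by transposing size and multiplicity, so they have equally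
many solutions. Swapping the two parts pairs the solutions with `a > b` with those with
`a < b`; the diagonal `a = b` is empty in the first problem (`N` is odd) and has
`∑_{e ∣ N} (e - 1) = σ₁(N) - d(N)` elements in the second. Finally `d(n) = 2 d(N)`.
-/

/-- Partitions of `n` into exactly two part sizes, as quadruples `(λ1, m1, λ2, m2)`. -/
def TwoSize (n : ℕ) : Set (ℕ × ℕ × ℕ × ℕ) :=
  {q | q.2.2.1 < q.1 ∧ 1 ≤ q.2.2.1 ∧ 1 ≤ q.2.1 ∧ 1 ≤ q.2.2.2 ∧
    q.1 * q.2.1 + q.2.2.1 * q.2.2.2 = n}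

namespace TwoSize

def solutions (N : ℕ) (P M : ℕ → Prop) : Set (ℕ × ℕ × ℕ × ℕ) :=
  {q | P q.1 ∧ M q.2.1 ∧ P q.2.2.1 ∧ M q.2.2.2 ∧ q.1 * q.2.1 + q.2.2.1 * q.2.2.2 = N}

def swapParts (q : ℕ × ℕ × ℕ × ℕ) : ℕ × ℕ × ℕ × ℕ := (q.2.2.1, q.2.2.2, q.1, q.2.1)

def transpose (q : ℕ × ℕ × ℕ × ℕ) : ℕ × ℕ × ℕ × ℕ := (q.2.1, q.1, q.2.2.2, q.2.2.1)

def doubleSizes (q : ℕ × ℕ × ℕ × ℕ) : ℕ × ℕ × ℕ × ℕ := (2 * q.1, q.2.1, 2 * q.2.2.1, q.2.2.2)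

def doubleMults (q : ℕ × ℕ × ℕ × ℕ) : ℕ × ℕ × ℕ × ℕ := (q.1, 2 * q.2.1, q.2.2.1, 2 * q.2.2.2)

theorem swapParts_involutive : Function.Involutive swapParts := fun _ => rfl

theorem transpose_involutive : Function.Involutive transpose := fun _ => rfl

theorem doubleSizes_injective : Function.Injective doubleSizes := by
  rintro ⟨a, m₁, b, m₂⟩ ⟨a', m₁', b', m₂'⟩ h
  simp only [doubleSizes, Prod.mk.injEq] at h ⊢
  omega

theorem doubleMults_injective : Function.Injective doubleMults := by
  rintro ⟨a, m₁, b, m₂⟩ ⟨a', m₁', b', m₂'⟩ h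
  simp only [doubleMults, Prod.mk.injEq] at h ⊢
  omega

theorem ncard_preimage_of_involutive {α : Type*} {f : α → α} (hf : Function.Involutive f)
    (s : Set α) : (f ⁻¹' s).ncard = s.ncard :=
  Set.ncard_preimage_of_injective_subset_range hf.injective (by simp [hf.surjective.range_eq])

theorem ncard_solutions_comm (N : ℕ) (P M : ℕ → Prop) :
    (solutions N P M).ncard = (solutions N M P).ncard := by
  rw [← ncard_preimage_of_involutive transpose_involutive]
  congr 1
  ext ⟨a, m₁, b, m₂⟩
  simp only [solutions, transpose, Set.mem_preimage, Set.mem_ofPred_eq, mul_comm]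
  tauto

theorem solutions_finite (N : ℕ) {P M : ℕ → Prop} (hP : ∀ x, P x → 0 < x)
    (hM : ∀ x, M x → 0 < x) : (solutions N P M).Finite := by
  refine (Set.finite_Iic (N, N, N, N)).subset ?_
  rintro ⟨a, m₁, b, m₂⟩ ⟨ha, hm₁, hb, hm₂, hsum⟩
  dsimp only at ha hm₁ hb hm₂ hsum
  have := Nat.le_mul_of_pos_right a (hM _ hm₁)
  have := Nat.le_mul_of_pos_left m₁ (hP _ ha)
  have := Nat.le_mul_of_pos_right b (hM _ hm₂)
  have := Nat.le_mul_of_pos_left m₂ (hP _ hb)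
  simp only [Set.mem_Iic, Prod.mk_le_mk]
  omega

/-- Exchanging the two parts is a bijection between the elements with `a > b` and those
with `a < b`. -/
theorem ncard_eq_two_mul_upper_add_diagonal {s : Set (ℕ × ℕ × ℕ × ℕ)} (hs : s.Finite)
    (hswap : ∀ q ∈ s, swapParts q ∈ s) :
    s.ncard = 2 * {q ∈ s | q.2.2.1 < q.1}.ncard + {q ∈ s | q.2.2.1 = q.1}.ncard := by
  have hlower : {q ∈ s | q.1 < q.2.2.1} = swapParts ⁻¹' {q ∈ s | q.2.2.1 < q.1} := by
    ext q
    exact ⟨fun ⟨hq, hlt⟩ => ⟨hswap q hq, hlt⟩, fun ⟨hq, hlt⟩ => ⟨hswap _ hq, hlt⟩⟩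
  have hsplit : s = ({q ∈ s | q.2.2.1 < q.1} ∪ {q ∈ s | q.1 < q.2.2.1}) ∪
      {q ∈ s | q.2.2.1 = q.1} := by
    ext q
    simp only [Set.mem_union, Set.mem_ofPred_eq]
    have := lt_trichotomy q.2.2.1 q.1
    tauto
  have hdisj₁ : Disjoint {q ∈ s | q.2.2.1 < q.1} {q ∈ s | q.1 < q.2.2.1} :=
    Set.disjoint_left.2 fun _ h₁ h₂ => lt_asymm h₁.2 h₂.2
  have hdisj₂ : Disjoint ({q ∈ s | q.2.2.1 < q.1} ∪ {q ∈ s | q.1 < q.2.2.1})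
      {q ∈ s | q.2.2.1 = q.1} := by
    refine Set.disjoint_left.2 fun q h₁ h₂ => ?_
    rcases h₁ with h₁ | h₁ <;> have := h₂.2 <;> have := h₁.2 <;> omega
  conv_lhs => rw [hsplit]
  rw [Set.ncard_union_eq hdisj₂ ((hs.sep _).union (hs.sep _)) (hs.sep _),
    Set.ncard_union_eq hdisj₁ (hs.sep _) (hs.sep _), hlower,
    ncard_preimage_of_involutive swapParts_involutive]
  ring

theorem swapParts_mem_solutions {N : ℕ} {P M : ℕ → Prop} {q : ℕ × ℕ × ℕ × ℕ}
    (hq : q ∈ solutions N P M) : swapParts q ∈ solutions N P M := by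
  obtain ⟨ha, hm₁, hb, hm₂, hsum⟩ := hq
  exact ⟨hb, hm₂, ha, hm₁, (add_comm _ _).trans hsum⟩

theorem ncard_solutions_eq (N : ℕ) {P M : ℕ → Prop} (hP : ∀ x, P x → 0 < x)
    (hM : ∀ x, M x → 0 < x) :
    (solutions N P M).ncard = 2 * {q ∈ solutions N P M | q.2.2.1 < q.1}.ncard +
      {q ∈ solutions N P M | q.2.2.1 = q.1}.ncard :=
  ncard_eq_two_mul_upper_add_diagonal (solutions_finite N hP hM)
    fun _ => swapParts_mem_solutions

/-- With odd multiplicities, equal sizes `a = b` would make `N = a (m₁ + m₂)` even. -/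
theorem diagonal_solutions_pos_odd_eq_empty {N : ℕ} (hN : Odd N) :
    {q ∈ solutions N (0 < ·) Odd | q.2.2.1 = q.1} = ∅ := by
  refine Set.eq_empty_of_forall_notMem ?_
  rintro ⟨a, m₁, b, m₂⟩ ⟨⟨-, hm₁, -, hm₂, hsum⟩, rfl : b = a⟩
  rw [← mul_add] at hsum
  exact Nat.not_even_iff_odd.2 hN (hsum ▸ (hm₁.add_odd hm₂).mul_left b)

/-- The divisor `e` is the total multiplicity `m₁ + m₂`. -/
theorem diagonal_solutions_odd_pos_eq_image {N : ℕ} (hN : Odd N) :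
    {q ∈ solutions N Odd (0 < ·) | q.2.2.1 = q.1} =
      (fun p : (_ : ℕ) × ℕ => (N / p.1, p.2, N / p.1, p.1 - p.2)) ''
        ↑(N.divisors.sigma fun e => Finset.Ico 1 e) := by
  ext ⟨a, c, b, d⟩
  simp only [solutions, Set.mem_ofPred_eq, Set.mem_image, Finset.coe_sigma,
    Set.mem_sigma_iff, Finset.mem_coe, Nat.mem_divisors, Finset.mem_Ico, Sigma.exists,
    Prod.mk.injEq]
  constructor
  · rintro ⟨⟨ha, hc, -, hd, hsum⟩, rfl⟩
    rw [← mul_add] at hsum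
    have hquot : N / (c + d) = b := by rw [← hsum, Nat.mul_div_cancel _ (by omega)]
    exact ⟨c + d, c, ⟨⟨Dvd.intro_left b hsum, hN.pos.ne'⟩, hc, by omega⟩,
      hquot, rfl, hquot, by omega⟩
  · rintro ⟨e, c, ⟨⟨he, -⟩, hc, hce⟩, rfl, rfl, rfl, rfl⟩
    have hcancel : N / e * e = N := Nat.div_mul_cancel he
    refine ⟨⟨(Nat.odd_mul.1 (hcancel ▸ hN)).1, hc, (Nat.odd_mul.1 (hcancel ▸ hN)).1,
      by omega, ?_⟩, rfl⟩
    rw [← mul_add, Nat.add_sub_cancel' hce.le, hcancel]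

theorem ncard_diagonal_solutions_odd_pos {N : ℕ} (hN : Odd N) :
    {q ∈ solutions N Odd (0 < ·) | q.2.2.1 = q.1}.ncard = ∑ e ∈ N.divisors, (e - 1) := by
  rw [diagonal_solutions_odd_pos_eq_image hN, Set.InjOn.ncard_image, Set.ncard_coe_finset,
    Finset.card_sigma]
  · simp only [Nat.card_Ico]
  · rintro ⟨e, c⟩ hmem ⟨e', c'⟩ hmem' heq
    simp only [Finset.coe_sigma, Set.mem_sigma_iff, Finset.mem_coe, Finset.mem_Ico] at hmem hmem'
    simp only [Prod.mk.injEq] at heq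
    obtain ⟨-, rfl, -, hsub⟩ := heq
    obtain rfl : e = e' := by omega
    rfl

theorem EOEO_eq_image (N : ℕ) :
    {q ∈ TwoSize (2 * N) | Even q.1 ∧ Odd q.2.1 ∧ Even q.2.2.1 ∧ Odd q.2.2.2} =
      doubleSizes '' {q ∈ solutions N (0 < ·) Odd | q.2.2.1 < q.1} := by
  ext ⟨a, m₁, b, m₂⟩
  simp only [TwoSize, solutions, doubleSizes, Set.mem_ofPred_eq, Set.mem_image, Prod.exists,
    Prod.mk.injEq]
  constructor
  · rintro ⟨⟨hlt, hb, -, -, hsum⟩, ⟨a', rfl⟩, hm₁, ⟨b', rfl⟩, hm₂⟩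
    exact ⟨a', m₁, b', m₂, ⟨⟨by omega, hm₁, by omega, hm₂, by linarith⟩, by omega⟩,
      by omega, rfl, by omega, rfl⟩
  · rintro ⟨a', m₁, b', m₂, ⟨⟨-, hm₁, hb, hm₂, hsum⟩, hlt⟩, rfl, rfl, rfl, rfl⟩
    exact ⟨⟨by omega, by omega, hm₁.pos, hm₂.pos, by rw [← hsum]; ring⟩,
      even_two_mul a', hm₁, even_two_mul b', hm₂⟩

theorem OEOE_eq_image (N : ℕ) :
    {q ∈ TwoSize (2 * N) | Odd q.1 ∧ Even q.2.1 ∧ Odd q.2.2.1 ∧ Even q.2.2.2} =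
      doubleMults '' {q ∈ solutions N Odd (0 < ·) | q.2.2.1 < q.1} := by
  ext ⟨a, m₁, b, m₂⟩
  simp only [TwoSize, solutions, doubleMults, Set.mem_ofPred_eq, Set.mem_image, Prod.exists,
    Prod.mk.injEq]
  constructor
  · rintro ⟨⟨hlt, -, hm₁, hm₂, hsum⟩, ha, ⟨c, rfl⟩, hb, ⟨d, rfl⟩⟩
    exact ⟨a, c, b, d, ⟨⟨ha, by omega, hb, by omega, by linarith⟩, hlt⟩,
      rfl, by omega, rfl, by omega⟩
  · rintro ⟨a, c, b, d, ⟨⟨ha, hc, hb, hd, hsum⟩, hlt⟩, rfl, rfl, rfl, rfl⟩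
    exact ⟨⟨hlt, hb.pos, by omega, by omega, by rw [← hsum]; ring⟩,
      ha, even_two_mul c, hb, even_two_mul d⟩

theorem two_mul_ncard_EOEO (N : ℕ) (hN : Odd N) :
    2 * {q ∈ TwoSize (2 * N) | Even q.1 ∧ Odd q.2.1 ∧ Even q.2.2.1 ∧ Odd q.2.2.2}.ncard =
      2 * {q ∈ TwoSize (2 * N) | Odd q.1 ∧ Even q.2.1 ∧ Odd q.2.2.1 ∧ Even q.2.2.2}.ncard +
        ∑ e ∈ N.divisors, (e - 1) := by
  have hsizes := ncard_solutions_eq N (P := (0 < ·)) (M := Odd) (fun _ h => h) fun _ h => h.pos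
  have hmults := ncard_solutions_eq N (P := Odd) (M := (0 < ·)) (fun _ h => h.pos) fun _ h => h
  rw [diagonal_solutions_pos_odd_eq_empty hN, Set.ncard_empty, add_zero] at hsizes
  rw [ncard_diagonal_solutions_odd_pos hN] at hmults
  rw [EOEO_eq_image, OEOE_eq_image, Set.ncard_image_of_injective _ doubleSizes_injective,
    Set.ncard_image_of_injective _ doubleMults_injective, ← hsizes, ← hmults,
    ncard_solutions_comm]

theorem sum_divisors_sub_one_add_card (N : ℕ) :
    ∑ e ∈ N.divisors, (e - 1) + N.divisors.card = ∑ e ∈ N.divisors, e := by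
  rw [Finset.card_eq_sum_ones, ← Finset.sum_add_distrib]
  exact Finset.sum_congr rfl fun e he => Nat.sub_add_cancel (Nat.pos_of_mem_divisors he)

theorem card_divisors_two_mul {N : ℕ} (hN : Odd N) :
    (2 * N).divisors.card = 2 * N.divisors.card := by
  rw [Nat.Coprime.card_divisors_mul (Nat.coprime_two_left.2 hN), Nat.Prime.divisors Nat.prime_two]
  rfl

end TwoSize

open TwoSize

theorem EOEO_eq_OEOE_add (n : ℕ) (hn : n % 4 = 2) :
    (Set.ncard {q ∈ TwoSize n |
        Even q.1 ∧ Odd q.2.1 ∧ Even q.2.2.1 ∧ Odd q.2.2.2} : ℚ) =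
      (Set.ncard {q ∈ TwoSize n |
        Odd q.1 ∧ Even q.2.1 ∧ Odd q.2.2.1 ∧ Even q.2.2.2} : ℚ) +
      ((∑ d ∈ (n / 2).divisors, d : ℕ) : ℚ) / 2 - ((n.divisors.card : ℚ) / 4) := by
  obtain ⟨N, rfl⟩ : ∃ N, n = 2 * N := ⟨n / 2, by omega⟩
  have hN : Odd N := Nat.odd_iff.2 (by omega)
  have hcount := two_mul_ncard_EOEO N hN
  have hsum := sum_divisors_sub_one_add_card N
  rw [Nat.mul_div_cancel_left N two_pos, card_divisors_two_mul hN, ← hsum]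
  generalize ∑ e ∈ N.divisors, (e - 1) = S at hcount ⊢
  have hcountQ := congrArg (Nat.cast : ℕ → ℚ) hcount
  push_cast at hcountQ ⊢
  linarith
end

section
/- Let n ≡ 2 (mod 4). The number of partitions of n into two part sizes of the form (2^{1+t} k)^a (2k)^b with t ≥ 1 and k, a, b all odd equals σ1(n/2)/2 − d(n/2)/2 (equivalently σ1(n/2)/2 − d(n)/4). -/
open Finset

def specialEOEO (n : ℕ) : Set (ℕ × ℕ × ℕ × ℕ) :=
  {q ∈ TwoSize n | ∃ t k, 1 ≤ t ∧ Odd k ∧ Odd q.2.1 ∧ Odd q.2.2.2 ∧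
    q.1 = 2 ^ (1 + t) * k ∧ q.2.2.1 = 2 * k}

theorem mem_specialEOEO_two_mul_iff {m : ℕ} {q : ℕ × ℕ × ℕ × ℕ} :
    q ∈ specialEOEO (2 * m) ↔ ∃ t k a b, 1 ≤ t ∧ Odd k ∧ Odd a ∧ Odd b ∧
      k * (2 ^ t * a + b) = m ∧ q = (2 ^ (1 + t) * k, a, 2 * k, b) := by
  constructor
  · rintro ⟨⟨-, -, -, -, hsum⟩, t, k, ht, hk, ha, hb, h1, h3⟩
    obtain ⟨l₁, a, l₂, b⟩ := q
    simp only at h1 h3 hsum ha hb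
    subst h1 h3
    refine ⟨t, k, a, b, ht, hk, ha, hb, ?_, rfl⟩
    rw [pow_add, pow_one] at hsum
    linarith
  · rintro ⟨t, k, a, b, ht, hk, ha, hb, hkm, rfl⟩
    have hk₀ := hk.pos
    have htwo : 2 ^ 1 < 2 ^ (1 + t) := Nat.pow_lt_pow_right one_lt_two (by omega)
    have hlt : 2 * k < 2 ^ (1 + t) * k := Nat.mul_lt_mul_of_pos_right htwo hk₀
    refine ⟨⟨hlt, Nat.mul_pos two_pos hk₀, ha.pos, hb.pos, ?_⟩, t, k, ht, hk, ha, hb, rfl, rfl⟩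
    rw [← hkm, pow_add]
    ring

theorem Nat.factorization_two_pow_mul_of_odd (t : ℕ) {a : ℕ} (ha : Odd a) :
    (2 ^ t * a).factorization 2 = t := by
  rw [Nat.factorization_mul (by positivity) ha.pos.ne', Finsupp.add_apply,
    Nat.factorization_eq_zero_of_not_dvd ha.not_two_dvd_nat]
  simp [Nat.prime_two.factorization_self]

def divisorEvenPairs (m : ℕ) : Finset ((_ : ℕ) × ℕ) :=
  m.divisors.sigma fun k => {e ∈ Ioc 0 (m / k - 1) | 2 ∣ e}

def specialEOEOOfPair (m : ℕ) (p : (_ : ℕ) × ℕ) : ℕ × ℕ × ℕ × ℕ :=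
  (2 ^ (1 + p.2.factorization 2) * p.1, ordCompl[2] p.2, 2 * p.1, m / p.1 - p.2)

theorem specialEOEO_two_mul_eq_image {m : ℕ} (hm : Odd m) :
    specialEOEO (2 * m) = specialEOEOOfPair m '' divisorEvenPairs m := by
  ext q
  simp only [mem_specialEOEO_two_mul_iff, divisorEvenPairs, Set.mem_image, coe_sigma,
    Set.mem_sigma_iff, mem_coe, Nat.mem_divisors, mem_filter, mem_Ioc, Sigma.exists]
  constructor
  · rintro ⟨t, k, a, b, ht, hk, ha, hb, hkm, rfl⟩
    have hmk : m / k = 2 ^ t * a + b := by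
      rw [← hkm, Nat.mul_div_cancel_left _ hk.pos]
    have hdvd : 2 ∣ 2 ^ t * a := Dvd.dvd.mul_right (dvd_pow_self 2 (by omega)) a
    have hpos : 0 < 2 ^ t * a := by have := ha.pos; positivity
    refine ⟨k, 2 ^ t * a, ⟨⟨Dvd.intro _ hkm, hm.pos.ne'⟩, ⟨hpos, by have := hb.pos; omega⟩,
      hdvd⟩, ?_⟩
    simp only [specialEOEOOfPair, Nat.factorization_two_pow_mul_of_odd t ha,
      Nat.mul_div_cancel_left a (by positivity : 0 < 2 ^ t), hmk, Nat.add_sub_cancel_left]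
  · rintro ⟨k, e, ⟨⟨hkm, -⟩, ⟨he₀, he⟩, he₂⟩, rfl⟩
    have hmk : Odd (m / k) := hm.of_dvd_nat (Nat.div_dvd_of_dvd hkm)
    have hmk₀ := hmk.pos
    refine ⟨e.factorization 2, k, ordCompl[2] e, m / k - e,
      Nat.prime_two.factorization_pos_of_dvd he₀.ne' he₂, hm.of_dvd_nat hkm,
      Nat.odd_iff.mpr (Nat.two_dvd_ne_zero.mp (Nat.not_dvd_ordCompl Nat.prime_two he₀.ne')),
      Nat.Odd.sub_even (by omega) hmk (even_iff_two_dvd.mpr he₂), ?_, rfl⟩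
    rw [Nat.ordProj_mul_ordCompl_eq_self, Nat.add_sub_cancel' (by omega),
      Nat.mul_div_cancel' hkm]

theorem injOn_specialEOEOOfPair (m : ℕ) :
    Set.InjOn (specialEOEOOfPair m) (divisorEvenPairs m) := by
  rintro ⟨k, e⟩ hke ⟨k', e'⟩ hke' heq
  simp only [divisorEvenPairs, coe_sigma, Set.mem_sigma_iff, mem_coe, mem_filter,
    mem_Ioc] at hke hke'
  simp only [specialEOEOOfPair, Prod.mk.injEq] at heq
  obtain ⟨-, -, hk, he⟩ := heq
  obtain rfl : k = k' := by omega
  obtain rfl : e = e' := by omega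
  rfl

theorem card_divisorEvenPairs (m : ℕ) :
    #(divisorEvenPairs m) = ∑ k ∈ m.divisors, (m / k - 1) / 2 := by
  simp only [divisorEvenPairs, card_sigma, Nat.Ioc_filter_dvd_card_eq_div]

theorem two_mul_sum_divisors_half_pred_add_card {m : ℕ} (hm : Odd m) :
    2 * ∑ k ∈ m.divisors, (m / k - 1) / 2 + #m.divisors = ∑ d ∈ m.divisors, d := by
  rw [Nat.sum_div_divisors m fun d => (d - 1) / 2, mul_sum, card_eq_sum_ones,
    ← sum_add_distrib]
  refine sum_congr rfl fun d hd => ?_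
  have hd := Nat.odd_iff.mp (hm.of_dvd_nat (Nat.dvd_of_mem_divisors hd))
  omega

/-- The number of partitions of `n ≡ 2 (mod 4)` into two part sizes of the form
`(2^{1+t} k)^a (2k)^b` with `t ≥ 1` and `k, a, b` all odd equals
`σ₁(n/2)/2 − d(n/2)/2`. -/
theorem special_EOEO_count (n : ℕ) (hn : n % 4 = 2) :
    (Set.ncard {q ∈ TwoSize n | ∃ t k, 1 ≤ t ∧ Odd k ∧ Odd q.2.1 ∧ Odd q.2.2.2 ∧
        q.1 = 2 ^ (1 + t) * k ∧ q.2.2.1 = 2 * k} : ℚ) =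
      ((∑ d ∈ (n / 2).divisors, d : ℕ) : ℚ) / 2 - (((n / 2).divisors.card : ℚ) / 2) := by
  obtain ⟨m, rfl⟩ : ∃ m, n = 2 * m := ⟨n / 2, by omega⟩
  have hm : Odd m := Nat.odd_iff.mpr (by omega)
  change (Set.ncard (specialEOEO (2 * m)) : ℚ) = _
  rw [specialEOEO_two_mul_eq_image hm, (injOn_specialEOEOOfPair m).ncard_image,
    Set.ncard_coe_finset, card_divisorEvenPairs, Nat.mul_div_cancel_left m two_pos,
    ← two_mul_sum_divisors_half_pred_add_card hm]
  push_cast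
  ring
end

section
/- Let n ≡ 14 (mod 16). Then the number of partitions λ1^{m1} λ2^{m2} of n into two part sizes with λ1, m2 odd and m1, λ2 even (parity class OEEO) is even; moreover the number of such partitions with λ1 m1 ≡ 2 (mod 4) equals the number with λ2 m2 ≡ 2 (mod 4). -/
/-- The parity class `OEEO`: `λ1` odd, `m1` even, `λ2` even, `m2` odd. -/
def OEEO (n : ℕ) : Set (ℕ × ℕ × ℕ × ℕ) :=
  {q ∈ TwoSize n | Odd q.1 ∧ Even q.2.1 ∧ Even q.2.2.1 ∧ Odd q.2.2.2}

def twoSizeConj (q : ℕ × ℕ × ℕ × ℕ) : ℕ × ℕ × ℕ × ℕ :=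
  (q.2.1 + q.2.2.2, q.2.2.1, q.2.1, q.1 - q.2.2.1)

theorem twoSizeConj_twoSizeConj {q : ℕ × ℕ × ℕ × ℕ} (h : q.2.2.1 ≤ q.1) :
    twoSizeConj (twoSizeConj q) = q := by
  obtain ⟨l1, m1, l2, m2⟩ := q
  simp only [twoSizeConj, Prod.mk.injEq] at h ⊢
  exact ⟨by omega, trivial, trivial, by omega⟩

theorem twoSizeConj_mem_OEEO {n : ℕ} {q : ℕ × ℕ × ℕ × ℕ} (hq : q ∈ OEEO n) :
    twoSizeConj q ∈ OEEO n := by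
  obtain ⟨l1, m1, l2, m2⟩ := q
  obtain ⟨⟨hl, hl2, hm1, hm2, hsum⟩, hl1_odd, hm1_even, hl2_even, hm2_odd⟩ := hq
  dsimp only at *
  refine ⟨⟨by dsimp [twoSizeConj]; omega, hm1, hl2, by dsimp [twoSizeConj]; omega, ?_⟩,
    hm1_even.add_odd hm2_odd, hl2_even, hm1_even, Nat.Odd.sub_even hl.le hl1_odd hl2_even⟩
  dsimp only [twoSizeConj]
  obtain ⟨d, rfl⟩ := Nat.exists_eq_add_of_lt hl
  rw [show l2 + d + 1 - l2 = d + 1 by omega, ← hsum]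
  ring

theorem twoSize_finite (n : ℕ) : (TwoSize n).Finite := by
  refine (Set.finite_Iic (n, n, n, n)).subset ?_
  rintro ⟨l1, m1, l2, m2⟩ ⟨hl, hl2, hm1, hm2, hsum⟩
  simp only [Set.mem_Iic, Prod.mk_le_mk] at hl hl2 hm1 hm2 hsum ⊢
  refine ⟨?_, ?_, ?_, ?_⟩ <;> nlinarith

theorem Nat.odd_mul_even_mod_four {a b : ℕ} (ha : Odd a) (hb : Even b) : a * b % 4 = b % 4 := by
  obtain ⟨k, rfl⟩ := ha
  obtain ⟨j, rfl⟩ := hb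
  rw [show (2 * k + 1) * (j + j) = 4 * (k * j) + (j + j) by ring, Nat.mul_add_mod]

theorem fst_mul_mod_four_of_mem_OEEO {n : ℕ} {q : ℕ × ℕ × ℕ × ℕ} (hq : q ∈ OEEO n) :
    q.1 * q.2.1 % 4 = q.2.1 % 4 :=
  Nat.odd_mul_even_mod_four hq.2.1 hq.2.2.1

theorem snd_mul_mod_four_of_mem_OEEO {n : ℕ} {q : ℕ × ℕ × ℕ × ℕ} (hq : q ∈ OEEO n) :
    q.2.2.1 * q.2.2.2 % 4 = q.2.2.1 % 4 := by
  rw [mul_comm]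
  exact Nat.odd_mul_even_mod_four hq.2.2.2.2 hq.2.2.2.1

theorem mul_mod_four_eq_two_iff_of_mem_OEEO {n : ℕ} (hn : n % 4 = 2) {q : ℕ × ℕ × ℕ × ℕ}
    (hq : q ∈ OEEO n) : q.1 * q.2.1 % 4 = 2 ↔ ¬ q.2.2.1 * q.2.2.2 % 4 = 2 := by
  have hsum := hq.1.2.2.2.2
  have hm1 := Nat.even_iff.mp hq.2.2.1
  have hl2 := Nat.even_iff.mp hq.2.2.2.1
  have h1 := fst_mul_mod_four_of_mem_OEEO hq
  have h2 := snd_mul_mod_four_of_mem_OEEO hq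
  omega

theorem twoSizeConj_bijOn (n : ℕ) :
    Set.BijOn twoSizeConj {q ∈ OEEO n | q.1 * q.2.1 % 4 = 2}
      {q ∈ OEEO n | q.2.2.1 * q.2.2.2 % 4 = 2} := by
  have hinv : ∀ q ∈ OEEO n, twoSizeConj (twoSizeConj q) = q := fun q hq ↦
    twoSizeConj_twoSizeConj hq.1.1.le
  refine Set.InvOn.bijOn ⟨fun q hq ↦ hinv q hq.1, fun q hq ↦ hinv q hq.1⟩ ?_ ?_
  · rintro q ⟨hq, h⟩
    have hc := twoSizeConj_mem_OEEO hq
    exact ⟨hc, (snd_mul_mod_four_of_mem_OEEO hc).trans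
      ((fst_mul_mod_four_of_mem_OEEO hq).symm.trans h)⟩
  · rintro q ⟨hq, h⟩
    have hc := twoSizeConj_mem_OEEO hq
    exact ⟨hc, (fst_mul_mod_four_of_mem_OEEO hc).trans
      ((snd_mul_mod_four_of_mem_OEEO hq).symm.trans h)⟩

theorem OEEO_even_and_balanced (n : ℕ) (hn : n % 16 = 14) :
    Even (Set.ncard (OEEO n)) ∧
    Set.ncard {q ∈ OEEO n | q.1 * q.2.1 % 4 = 2} =
      Set.ncard {q ∈ OEEO n | q.2.2.1 * q.2.2.2 % 4 = 2} := by
  set A := {q ∈ OEEO n | q.1 * q.2.1 % 4 = 2}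
  set B := {q ∈ OEEO n | q.2.2.1 * q.2.2.2 % 4 = 2}
  have hcard : A.ncard = B.ncard := (twoSizeConj_bijOn n).ncard_eq
  have hiff : ∀ q ∈ OEEO n, q.1 * q.2.1 % 4 = 2 ↔ ¬ q.2.2.1 * q.2.2.2 % 4 = 2 :=
    fun q ↦ mul_mod_four_eq_two_iff_of_mem_OEEO (by omega)
  have hcover : OEEO n = A ∪ B := by
    refine Set.Subset.antisymm (fun q hq ↦ ?_) (Set.union_subset (Set.sep_subset _ _)
      (Set.sep_subset _ _))
    by_cases hB : q.2.2.1 * q.2.2.2 % 4 = 2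
    · exact Or.inr ⟨hq, hB⟩
    · exact Or.inl ⟨hq, (hiff q hq).mpr hB⟩
  have hdisj : Disjoint A B :=
    Set.disjoint_left.mpr fun q ⟨hq, hA⟩ ⟨_, hB⟩ ↦ (hiff q hq).mp hA hB
  have hfin : (OEEO n).Finite := (twoSize_finite n).subset fun _ hq ↦ hq.1
  refine ⟨?_, hcard⟩
  rw [hcover, Set.ncard_union_eq hdisj (hfin.subset (Set.sep_subset _ _))
    (hfin.subset (Set.sep_subset _ _)), hcard]
  exact ⟨B.ncard, rfl⟩
end
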